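/- arXiv:2202.10626 — 3 statements merged into one kernel-verified Lean document; each statement's English description precedes it below -/
import Mathlib

section
/- Let G be a group, let G^φ be an isomorphic copy of G via an isomorphism φ, and let ν(G) be the quotient of the free product G ∗ G^φ by the normal subgroup generated by the relations [g₁, g₂^φ]^{g₃} = [g₁^{g₃}, (g₂^{g₃})^φ] = [g₁, g₂^φ]^{g₃^φ} for all g₁,g₂,g₃ ∈ G. Then for all g₁, g₂, g₃ ∈ G the following six elements of ν(G) are equal: [g₁^φ, g₂, g₃] = [g₁, g₂^φ, g₃] = [g₁, g₂, g₃^φ] = [g₁^φ, g₂^φ, g₃] = [g₁^φ, g₂, g₃^φ] = [g₁, g₂^φ, g₃^φ]. -/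
/-- The paper's commutator convention: `[x, y] = x⁻¹ * y⁻¹ * x * y`. -/
def cm {G : Type*} [Group G] (x y : G) : G := x⁻¹ * y⁻¹ * x * y

/-- Conjugation convention: `x ^ y = y⁻¹ * x * y`. -/
def cj {G : Type*} [Group G] (x y : G) : G := y⁻¹ * x * y

namespace Rocco

variable (G : Type*) [Group G]

/-- The defining relators of Rocco's group `ν(G)`, inside the free product `G ∗ G`
(the second factor playing the role of the isomorphic copy `G^φ`). -/
def rels : Set (Monoid.Coprod G G) :=
  {x | ∃ g₁ g₂ g₃ : G,
    x = cj (cm (Monoid.Coprod.inl g₁) (Monoid.Coprod.inr g₂)) (Monoid.Coprod.inl g₃) *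
        (cm (Monoid.Coprod.inl (cj g₁ g₃)) (Monoid.Coprod.inr (cj g₂ g₃)))⁻¹ ∨
    x = cj (cm (Monoid.Coprod.inl g₁) (Monoid.Coprod.inr g₂)) (Monoid.Coprod.inl g₃) *
        (cj (cm (Monoid.Coprod.inl g₁) (Monoid.Coprod.inr g₂)) (Monoid.Coprod.inr g₃))⁻¹}

/-- Rocco's construction `ν(G)`. -/
abbrev nu := Monoid.Coprod G G ⧸ Subgroup.normalClosure (rels G)

/-- The canonical image of `G` in `ν(G)`. -/
def ν₁ : G →* nu G := (QuotientGroup.mk' (Subgroup.normalClosure (rels G))).comp Monoid.Coprod.inl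

/-- The canonical image of the copy `G^φ` in `ν(G)`; `ν₂ g` plays the role of `g^φ`. -/
def ν₂ : G →* nu G := (QuotientGroup.mk' (Subgroup.normalClosure (rels G))).comp Monoid.Coprod.inr

end Rocco


/-! Write `λ(u, v) = [A u, B v]`, where `A u = u` and `B v = v^φ` in `ν(G)`. The defining
relations say that conjugating `λ(u, v)` by `A z` or by `B z` conjugates both indices by `z`;
hence conjugation by `λ(u, v)` conjugates the indices by `[u, v]`. Expanding `λ(g, u * x)` in two
ways and comparing with `λ(g * [g, u], x)` gives the key identity `λ([g, u], x) = [λ(g, u), A x]`,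
that is `[g, u^φ, x] = [g, u, x^φ]`. Together with `λ(u⁻¹, x^u) = λ(u, x)⁻¹` it also gives
`[g^φ, u, x] = [g, u^φ, x]`. The relations are symmetric under exchanging `G` and `G^φ`, which
yields the remaining equalities. -/

section CommutatorIdentities

variable {G : Type*} [Group G]

theorem cj_cj (x a b : G) : cj (cj x a) b = cj x (a * b) := by
  simp only [cj]; group

theorem cj_inv (x a : G) : cj x⁻¹ a = (cj x a)⁻¹ := by
  simp only [cj]; group

theorem inv_cm (x y : G) : (cm x y)⁻¹ = cm y x := by
  simp only [cm]; group

theorem cm_eq_inv_mul_cj (x y : G) : cm x y = x⁻¹ * cj x y := by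
  simp only [cm, cj]; group

theorem cj_eq_mul_cm (x y : G) : cj x y = x * cm x y := by
  simp only [cj, cm]; group

theorem cm_mul_left (x y z : G) : cm (x * y) z = cj (cm x z) y * cm y z := by
  simp only [cm, cj]; group

theorem cm_mul_right (x y z : G) : cm x (y * z) = cm x z * cj (cm x y) z := by
  simp only [cm, cj]; group

theorem map_cm {H : Type*} [Group H] (f : G →* H) (x y : G) : f (cm x y) = cm (f x) (f y) := by
  simp [cm]

theorem map_cj {H : Type*} [Group H] (f : G →* H) (x y : G) : f (cj x y) = cj (f x) (f y) := by
  simp [cj]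

end CommutatorIdentities

/-- The relations of `ν(G)`, for homomorphisms `A`, `B` playing `g ↦ g` and `g ↦ g^φ`. -/
structure IsRoccoPair {G H : Type*} [Group G] [Group H] (A B : G →* H) : Prop where
  cj_left : ∀ u v z : G, cj (cm (A u) (B v)) (A z) = cm (A (cj u z)) (B (cj v z))
  cj_right : ∀ u v z : G, cj (cm (A u) (B v)) (B z) = cm (A (cj u z)) (B (cj v z))

namespace IsRoccoPair

variable {G H : Type*} [Group G] [Group H] {A B : G →* H}

theorem symm (h : IsRoccoPair A B) : IsRoccoPair B A where
  cj_left u v z := by rw [← inv_cm (A v), cj_inv, h.cj_right, inv_cm]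
  cj_right u v z := by rw [← inv_cm (A v), cj_inv, h.cj_left, inv_cm]

theorem cm_map_mul_left (h : IsRoccoPair A B) (u v x : G) :
    cm (A (u * v)) (B x) = cm (A (cj u v)) (B (cj x v)) * cm (A v) (B x) := by
  rw [map_mul, cm_mul_left, h.cj_left]

theorem cm_map_mul_right (h : IsRoccoPair A B) (g u v : G) :
    cm (A g) (B (u * v)) = cm (A g) (B v) * cm (A (cj g v)) (B (cj u v)) := by
  rw [map_mul, cm_mul_right, h.cj_right]

theorem cm_map_inv_left (h : IsRoccoPair A B) (u x : G) :
    cm (A u⁻¹) (B (cj x u)) = (cm (A u) (B x))⁻¹ := by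
  have hu := h.cm_map_mul_left u⁻¹ u x
  rw [inv_mul_cancel, map_one] at hu
  exact eq_inv_of_mul_eq_one_left (by simpa [cm, cj] using hu.symm)

theorem cj_cm_map (h : IsRoccoPair A B) (p q u v : G) :
    cj (cm (A p) (B q)) (cm (A u) (B v)) = cm (A (cj p (cm u v))) (B (cj q (cm u v))) := by
  have hcm : cm (A u) (B v) = A u⁻¹ * B v⁻¹ * A u * B v := by simp [cm]
  rw [hcm, ← cj_cj, ← cj_cj, ← cj_cj, h.cj_left, h.cj_right, h.cj_left, h.cj_right]
  simp only [cj_cj, cm]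

theorem cm_map_cj_left (h : IsRoccoPair A B) (g u x : G) :
    cm (A (cj g u)) (B x) =
      (cm (A g) (B u))⁻¹ * (cm (A g) (B x) * cm (A (cj g x)) (B (cj u x))) := by
  have hx := h.cm_map_mul_right g (cj x u⁻¹) u
  rw [cj_cj, inv_mul_cancel, show cj x u⁻¹ * u = u * x by simp only [cj]; group,
    h.cm_map_mul_right, show cj x 1 = x by simp [cj]] at hx
  rw [hx]; group

theorem cm_map_cm_left (h : IsRoccoPair A B) (g u x : G) :
    cm (A (cm g u)) (B x) = cm (cm (A g) (B u)) (A x) := by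
  set k := cm g u
  have hexpand : cm (A (cj g u)) (B x) = cm (A (cj g k)) (B (cj x k)) * cm (A k) (B x) := by
    rw [cj_eq_mul_cm g u, h.cm_map_mul_left]
  have hconj : cm (A (cj g k)) (B (cj x k)) = cj (cm (A g) (B x)) (cm (A g) (B u)) :=
    (h.cj_cm_map g x g u).symm
  calc cm (A k) (B x) = (cm (A (cj g k)) (B (cj x k)))⁻¹ * cm (A (cj g u)) (B x) := by
        rw [hexpand]; group
    _ = cm (cm (A g) (B u)) (A x) := by
        rw [hconj, h.cm_map_cj_left, cm_eq_inv_mul_cj _ (A x), h.cj_left]; simp only [cj]; group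

theorem cm_map_cj_cj (h : IsRoccoPair A B) (g u x : G) :
    cm (A (cj g x)) (B (cj u x)) = cm (A g) (B u) * cm (A (cm g u)) (B x) := by
  rw [h.cm_map_cm_left, cm_eq_inv_mul_cj _ (A x), h.cj_left, mul_inv_cancel_left]

theorem cm_cm_ABA_eq_AAB (h : IsRoccoPair A B) (g₁ g₂ g₃ : G) :
    cm (cm (A g₁) (B g₂)) (A g₃) = cm (cm (A g₁) (A g₂)) (B g₃) := by
  rw [← map_cm, h.cm_map_cm_left]

theorem cm_cm_ABA_eq_ABB (h : IsRoccoPair A B) (g₁ g₂ g₃ : G) :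
    cm (cm (A g₁) (B g₂)) (A g₃) = cm (cm (A g₁) (B g₂)) (B g₃) := by
  rw [cm_eq_inv_mul_cj, cm_eq_inv_mul_cj _ (B g₃), h.cj_left, h.cj_right]

theorem cm_cm_BAA_eq_ABA (h : IsRoccoPair A B) (g₁ g₂ g₃ : G) :
    cm (cm (B g₁) (A g₂)) (A g₃) = cm (cm (A g₁) (B g₂)) (A g₃) := by
  rw [← h.cm_map_cm_left]
  set k := cm g₁ g₂
  have hk : cm g₂ g₁ = k⁻¹ := (inv_cm g₁ g₂).symm
  have hinv : cm (A k⁻¹) (B g₃) = (cj (cm (A k) (B g₃)) (cm (A g₂) (B g₁)))⁻¹ := by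
    rw [h.cj_cm_map, hk, show cj k k⁻¹ = k by simp [cj], ← h.cm_map_inv_left, cj_cj,
      inv_mul_cancel, show cj g₃ 1 = g₃ by simp [cj]]
  rw [← inv_cm (A g₂), cm_eq_inv_mul_cj, cj_inv, h.cj_left, h.cm_map_cj_cj, hk, hinv]
  simp only [cj]; group

end IsRoccoPair

namespace Rocco

variable (G : Type*) [Group G]

theorem mk_eq_of_mul_inv_mem_rels {x y : Monoid.Coprod G G} (hxy : x * y⁻¹ ∈ rels G) :
    QuotientGroup.mk' (Subgroup.normalClosure (rels G)) x =
      QuotientGroup.mk' (Subgroup.normalClosure (rels G)) y :=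
  QuotientGroup.eq_iff_div_mem.mpr (div_eq_mul_inv x y ▸ Subgroup.subset_normalClosure hxy)

theorem isRoccoPair_ν : IsRoccoPair (ν₁ G) (ν₂ G) := by
  have hcj_left (u v z : G) :
      cj (cm (ν₁ G u) (ν₂ G v)) (ν₁ G z) = cm (ν₁ G (cj u z)) (ν₂ G (cj v z)) := by
    simpa only [ν₁, ν₂, MonoidHom.comp_apply, map_cm, map_cj] using
      mk_eq_of_mul_inv_mem_rels G ⟨u, v, z, Or.inl rfl⟩
  have hcj_eq (u v z : G) :
      cj (cm (ν₁ G u) (ν₂ G v)) (ν₁ G z) = cj (cm (ν₁ G u) (ν₂ G v)) (ν₂ G z) := by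
    simpa only [ν₁, ν₂, MonoidHom.comp_apply, map_cm, map_cj] using
      mk_eq_of_mul_inv_mem_rels G ⟨u, v, z, Or.inr rfl⟩
  exact ⟨hcj_left, fun u v z => (hcj_eq u v z).symm.trans (hcj_left u v z)⟩

end Rocco

open Rocco in
/-- In `ν(G)` the six mixed triple commutators coincide. -/
theorem six_triple_commutators_eq {G : Type*} [Group G] (g₁ g₂ g₃ : G) :
    cm (cm (ν₂ G g₁) (ν₁ G g₂)) (ν₁ G g₃) = cm (cm (ν₁ G g₁) (ν₂ G g₂)) (ν₁ G g₃) ∧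
    cm (cm (ν₁ G g₁) (ν₂ G g₂)) (ν₁ G g₃) = cm (cm (ν₁ G g₁) (ν₁ G g₂)) (ν₂ G g₃) ∧
    cm (cm (ν₁ G g₁) (ν₁ G g₂)) (ν₂ G g₃) = cm (cm (ν₂ G g₁) (ν₂ G g₂)) (ν₁ G g₃) ∧
    cm (cm (ν₂ G g₁) (ν₂ G g₂)) (ν₁ G g₃) = cm (cm (ν₂ G g₁) (ν₁ G g₂)) (ν₂ G g₃) ∧
    cm (cm (ν₂ G g₁) (ν₁ G g₂)) (ν₂ G g₃) = cm (cm (ν₁ G g₁) (ν₂ G g₂)) (ν₂ G g₃) := by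
  have hν := isRoccoPair_ν G
  have hBAA := hν.cm_cm_BAA_eq_ABA g₁ g₂ g₃
  have hAAB := (hν.cm_cm_ABA_eq_AAB g₁ g₂ g₃).symm
  have hABB := (hν.cm_cm_ABA_eq_ABB g₁ g₂ g₃).symm
  have hBAB := (hν.symm.cm_cm_BAA_eq_ABA g₁ g₂ g₃).symm.trans hABB
  have hBBA := (hν.symm.cm_cm_ABA_eq_AAB g₁ g₂ g₃).symm.trans hBAB
  simp only [hBAA, hAAB, hABB, hBAB, hBBA, and_self]
end

section
/- Let G be a group and ν(G) Rocco's construction on G. Then in ν(G) one has [[g₁, g₂^φ], [h₁, h₂^φ]] = [[g₁, g₂], [h₁, h₂^φ]] for all g₁, g₂, h₁, h₂ ∈ G. -/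
/-!
In `ν(G)` both `g` and `g^φ` act on a commutator `[g₁, g₂^φ]` as conjugation by `g` acts on
`g₁` and `g₂`. Hence the word `[g₁, g₂^φ]` acts on `[h₁, h₂^φ]` exactly as its image `[g₁, g₂]`
in `G` does, and `[a, k] = (k^a)⁻¹ k` depends on `a` only through `k^a`.
-/

section GroupLemmas

variable {M N : Type*} [Group M] [Group N]

lemma map_cm_s2 (f : M →* N) (x y : M) : f (cm x y) = cm (f x) (f y) := by
  simp only [cm, map_mul, map_inv]

lemma map_cj_s2 (f : M →* N) (x y : M) : f (cj x y) = cj (f x) (f y) := by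
  simp only [cj, map_mul, map_inv]

lemma cj_mul (x a b : M) : cj x (a * b) = cj (cj x a) b := by
  simp only [cj, mul_inv_rev, mul_assoc]

lemma cm_eq_cm_of_cj_eq {a b k : M} (h : cj k a = cj k b) : cm a k = cm b k := by
  have key : ∀ c : M, cm c k = (cj k c)⁻¹ * k := fun c => by
    simp only [cm, cj, mul_inv_rev, inv_inv, mul_assoc]
  rw [key, key, h]

end GroupLemmas

namespace Rocco

variable {G : Type*} [Group G]

lemma mk_eq_of_mem_rels {x y : Monoid.Coprod G G} (h : x * y⁻¹ ∈ rels G) :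
    QuotientGroup.mk' (Subgroup.normalClosure (rels G)) x =
      QuotientGroup.mk' (Subgroup.normalClosure (rels G)) y := by
  rw [← mul_inv_eq_one, ← map_inv, ← map_mul, QuotientGroup.mk'_apply, QuotientGroup.eq_one_iff]
  exact Subgroup.subset_normalClosure h

lemma cj_cm_ν₁ (g₁ g₂ g₃ : G) :
    cj (cm (ν₁ G g₁) (ν₂ G g₂)) (ν₁ G g₃) = cm (ν₁ G (cj g₁ g₃)) (ν₂ G (cj g₂ g₃)) := by
  simpa only [ν₁, ν₂, MonoidHom.comp_apply, map_cj_s2, map_cm_s2] using mk_eq_of_mem_rels ⟨g₁, g₂, g₃, Or.inl rfl⟩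

lemma cj_cm_ν₂ (g₁ g₂ g₃ : G) :
    cj (cm (ν₁ G g₁) (ν₂ G g₂)) (ν₂ G g₃) = cm (ν₁ G (cj g₁ g₃)) (ν₂ G (cj g₂ g₃)) := by
  rw [← cj_cm_ν₁]
  simpa only [ν₁, ν₂, MonoidHom.comp_apply, map_cj_s2, map_cm_s2] using (mk_eq_of_mem_rels ⟨g₁, g₂, g₃, Or.inr rfl⟩).symm

lemma cj_cm_cm (g₁ g₂ x y : G) :
    cj (cm (ν₁ G g₁) (ν₂ G g₂)) (cm (ν₁ G x) (ν₂ G y)) =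
      cm (ν₁ G (cj g₁ (cm x y))) (ν₂ G (cj g₂ (cm x y))) := by
  have word : cm (ν₁ G x) (ν₂ G y) = ν₁ G x⁻¹ * ν₂ G y⁻¹ * ν₁ G x * ν₂ G y := by
    simp only [cm, map_inv]
  have expand : cm x y = x⁻¹ * y⁻¹ * x * y := rfl
  rw [word, expand]
  simp only [cj_mul, cj_cm_ν₁, cj_cm_ν₂]

end Rocco

open Rocco in
theorem comm_comm_phi_eq {G : Type*} [Group G] (g₁ g₂ h₁ h₂ : G) :
    cm (cm (ν₁ G g₁) (ν₂ G g₂)) (cm (ν₁ G h₁) (ν₂ G h₂)) =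
      cm (ν₁ G (cm g₁ g₂)) (cm (ν₁ G h₁) (ν₂ G h₂)) :=
  cm_eq_cm_of_cj_eq (by rw [cj_cm_cm, cj_cm_ν₁])
end

section
/- Let G be a finite p-group of nilpotency class c. Then Rocco's group ν(G) is a finite p-group of nilpotency class at most c + 1. -/
/-!
Let `Γₙ = (⊤ : Subgroup G).lowerCentralSeries n` (so `Γ₀ = G`) and let `Kₙ ≤ ν(G)` be generated by
`Γₙ₊₁`, its copy `Γₙ₊₁^φ`, and the commutators `[Γₙ, G^φ]`, `[G, Γₙ^φ]`. Rocco's identity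
`[[g, h^φ], x] = [[g, h], x^φ] = [[g, h^φ], x^φ]` gives `[Kₙ, ν(G)] ≤ Kₙ₊₁`, hence `γₙ₊₁ ≤ Kₙ`
for the lower central series `γ` of `ν(G)` (indexed the same way), and `K_c = 1` when `Γ_c = 1`;
this bounds the class by `c + 1`. Modulo `Kₙ₊₁` the maps `u ↦ [u, b^φ]` and `u ↦ [b, u^φ]` are
multiplicative on `Γₙ`, so `Kₙ / Kₙ₊₁` is central and generated by finitely many elements of
`p`-power order. Each layer is therefore a finite `p`-group, and so is `ν(G)`.
-/

open Subgroup
open scoped commutatorElement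

section

variable {H : Type*} [Group H]

theorem Subgroup.commutator_closure_le {S T : Set H} {N : Subgroup H} [N.Normal]
    (h : ∀ s ∈ S, ∀ t ∈ T, ⁅s, t⁆ ∈ N) : ⁅closure S, closure T⁆ ≤ N := by
  rw [← QuotientGroup.ker_mk' N, ← map_eq_bot_iff, map_commutator,
    commutator_eq_bot_iff_le_centralizer, MonoidHom.map_closure, MonoidHom.map_closure,
    centralizer_closure, closure_le]
  rintro _ ⟨s, hs, rfl⟩ _ ⟨t, ht, rfl⟩
  refine (commutatorElement_eq_one_iff_mul_comm.mp ?_).symm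
  rw [← map_commutatorElement]
  exact (QuotientGroup.eq_one_iff _).mpr (h s hs t ht)

variable {p : ℕ}

theorem Subgroup.isPGroup_closure_of_subset_center {T : Set H} (hT : T ⊆ center H)
    (htors : ∀ t ∈ T, ∃ k : ℕ, t ^ p ^ k = 1) : IsPGroup p (closure T) := by
  rintro ⟨x, hx⟩
  simp only [Subtype.ext_iff, SubgroupClass.coe_pow, OneMemClass.coe_one]
  induction hx using closure_induction with
  | mem t ht => exact htors t ht
  | one => exact ⟨0, one_pow _⟩
  | mul x y hx _ hpx hpy =>
    obtain ⟨i, hi⟩ := hpx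
    obtain ⟨j, hj⟩ := hpy
    have hxy : Commute x y := ((closure_le _).mpr hT hx).comm y
    refine ⟨i + j, ?_⟩
    rw [hxy.mul_pow, pow_add, pow_mul, hi, one_pow, one_mul, mul_comm, pow_mul, hj, one_pow]
  | inv x _ hpx =>
    obtain ⟨k, hk⟩ := hpx
    exact ⟨k, by rw [inv_pow, hk, inv_one]⟩

theorem Subgroup.finite_closure_of_subset_center (hp : p ≠ 0) {T : Set H} (hfin : T.Finite)
    (hT : T ⊆ center H) (htors : ∀ t ∈ T, ∃ k : ℕ, t ^ p ^ k = 1) : Finite (closure T) := by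
  have : Finite T := hfin
  let _ : CommGroup (closure T) :=
    { mul_comm := fun x y => Subtype.ext (((closure_le _).mpr hT x.2).comm y) }
  exact CommGroup.finite_of_fg_isMulTorsion _
    ((isPGroup_closure_of_subset_center hT htors).isOfFinOrder hp)

theorem IsPGroup.of_quotient {A : Subgroup H} [A.Normal] (hA : IsPGroup p A)
    (hQ : IsPGroup p (H ⧸ A)) : IsPGroup p H := by
  intro g
  obtain ⟨i, hi⟩ := hQ g
  obtain ⟨j, hj⟩ := hA ⟨g ^ p ^ i, (QuotientGroup.eq_one_iff _).mp (by rwa [QuotientGroup.mk_pow])⟩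
  refine ⟨i + j, ?_⟩
  rw [pow_add, pow_mul]
  simpa only [Subtype.ext_iff, SubgroupClass.coe_pow, OneMemClass.coe_one] using hj

theorem finite_isPGroup_quotient_of_commutator_le (hp : p ≠ 0) {M N : Subgroup H} [M.Normal]
    [N.Normal] (hNM : N ≤ M) (hMN : ⁅M, ⊤⁆ ≤ N) {S : Set H} (hS : S.Finite)
    (hSM : closure S = M) (htors : ∀ s ∈ S, ∃ k : ℕ, (s : H ⧸ N) ^ p ^ k = 1)
    [Finite (H ⧸ M)] (hM : IsPGroup p (H ⧸ M)) : Finite (H ⧸ N) ∧ IsPGroup p (H ⧸ N) := by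
  set T : Set (H ⧸ N) := QuotientGroup.mk' N '' S
  have hT : T ⊆ center (H ⧸ N) := by
    rintro _ ⟨s, hs, rfl⟩
    rw [SetLike.mem_coe, mem_center_iff]
    intro g
    obtain ⟨g, rfl⟩ := QuotientGroup.mk'_surjective N g
    rw [← commutatorElement_eq_one_iff_mul_comm, ← commutatorElement_inv, inv_eq_one]
    exact (QuotientGroup.eq_one_iff _).mpr
      (hMN (commutator_mem_commutator (hSM ▸ subset_closure hs) (mem_top g)))
  have htorsT : ∀ t ∈ T, ∃ k : ℕ, t ^ p ^ k = 1 := by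
    rintro _ ⟨s, hs, rfl⟩
    exact htors s hs
  have hTA : closure T = M.map (QuotientGroup.mk' N) := by rw [← hSM, MonoidHom.map_closure]
  set A := M.map (QuotientGroup.mk' N)
  have hA : Finite (closure T) ∧ IsPGroup p (closure T) :=
    ⟨finite_closure_of_subset_center hp (hS.image _) hT htorsT,
      isPGroup_closure_of_subset_center hT htorsT⟩
  rw [hTA] at hA
  obtain ⟨_, hpA⟩ := hA
  have e : (H ⧸ N) ⧸ A ≃* H ⧸ M := QuotientGroup.quotientQuotientEquivQuotient N M hNM
  have : Finite ((H ⧸ N) ⧸ A) := Finite.of_equiv _ e.symm.toEquiv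
  exact ⟨Finite.of_equiv _ (groupEquivQuotientProdSubgroup (s := A)).symm,
    hpA.of_quotient (hM.of_equiv e.symm)⟩

end

namespace Rocco

variable {G : Type*} [Group G]

theorem range_ν₁_sup_range_ν₂ : (ν₁ G).range ⊔ (ν₂ G).range = ⊤ := by
  rw [← QuotientGroup.range_mk', Monoid.Coprod.range_eq]
  rfl

theorem closure_range_ν₁_union_range_ν₂ :
    closure (Set.range (ν₁ G) ∪ Set.range (ν₂ G)) = ⊤ := by
  rw [Subgroup.closure_union, ← MonoidHom.coe_range, ← MonoidHom.coe_range, closure_eq, closure_eq,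
    range_ν₁_sup_range_ν₂]

/-- The commutator `[a, b^φ]`, but in Mathlib's convention `⁅x, y⁆ = x * y * x⁻¹ * y⁻¹`, not the
paper's `cm`. -/
def crossComm (a b : G) : nu G := ⁅ν₁ G a, ν₂ G b⁆

theorem mk_eq_one_of_mem_rels {r : Monoid.Coprod G G} (hr : r ∈ rels G) :
    QuotientGroup.mk' (Subgroup.normalClosure (rels G)) r = 1 :=
  (QuotientGroup.eq_one_iff r).mpr (subset_normalClosure hr)

theorem ν₁_conj_crossComm (g a b : G) :
    ν₁ G g * crossComm a b * (ν₁ G g)⁻¹ = crossComm (g * a * g⁻¹) (g * b * g⁻¹) := by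
  -- the relator at `(a⁻¹, b⁻¹, g⁻¹)` is this identity in the paper's conventions
  have h := mk_eq_one_of_mem_rels (G := G) ⟨a⁻¹, b⁻¹, g⁻¹, Or.inl rfl⟩
  simp only [cj, cm, map_mul, map_inv, mul_inv_eq_one] at h
  simp only [crossComm, commutatorElement_def, map_mul, map_inv]
  group at h ⊢
  exact h

theorem ν₂_conj_crossComm (g a b : G) :
    ν₂ G g * crossComm a b * (ν₂ G g)⁻¹ = crossComm (g * a * g⁻¹) (g * b * g⁻¹) := by
  have h := mk_eq_one_of_mem_rels (G := G) ⟨a⁻¹, b⁻¹, g⁻¹, Or.inr rfl⟩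
  simp only [cj, cm, map_mul, map_inv, mul_inv_eq_one] at h
  rw [← ν₁_conj_crossComm]
  simp only [crossComm, commutatorElement_def]
  group at h ⊢
  exact h.symm

@[simp] theorem crossComm_one_left (b : G) : crossComm 1 b = 1 := by simp [crossComm]

@[simp] theorem crossComm_one_right (a : G) : crossComm a 1 = 1 := by simp [crossComm]

theorem crossComm_mul_left (a₁ a₂ b : G) :
    crossComm (a₁ * a₂) b = ν₁ G a₁ * crossComm a₂ b * (ν₁ G a₁)⁻¹ * crossComm a₁ b := by
  simp only [crossComm, commutatorElement_def, map_mul]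
  group

theorem crossComm_mul_right (a b₁ b₂ : G) :
    crossComm a (b₁ * b₂) = crossComm a b₁ * (ν₂ G b₁ * crossComm a b₂ * (ν₂ G b₁)⁻¹) := by
  simp only [crossComm, commutatorElement_def, map_mul]
  group

theorem crossComm_conj_crossComm (g h a b : G) :
    crossComm g h * crossComm a b * (crossComm g h)⁻¹ =
      ν₁ G ⁅g, h⁆ * crossComm a b * (ν₁ G ⁅g, h⁆)⁻¹ := by
  have e : crossComm g h * crossComm a b * (crossComm g h)⁻¹ =
      ν₁ G g * (ν₂ G h * (ν₁ G g⁻¹ * (ν₂ G h⁻¹ * crossComm a b * (ν₂ G h⁻¹)⁻¹) *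
        (ν₁ G g⁻¹)⁻¹) * (ν₂ G h)⁻¹) * (ν₁ G g)⁻¹ := by
    simp only [crossComm, commutatorElement_def, map_inv]
    group
  rw [e, ν₂_conj_crossComm, ν₁_conj_crossComm, ν₂_conj_crossComm, ν₁_conj_crossComm,
    ν₁_conj_crossComm]
  simp only [commutatorElement_def]
  congr 1 <;> group

theorem commutatorElement_crossComm_ν₁ (g h x : G) :
    ⁅crossComm g h, ν₁ G x⁆ = crossComm ⁅g, h⁆ x := by
  set t := crossComm g h
  set t' := crossComm (h * g * h⁻¹) x
  have hx : ν₁ G x * t * (ν₁ G x)⁻¹ = (crossComm g x)⁻¹ * (t * t') := by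
    have hxh : crossComm g (x * h) = t * t' := by
      rw [show x * h = h * (h⁻¹ * x * h) by group, crossComm_mul_right, ν₂_conj_crossComm]
      congr 2; group
    rw [← hxh, crossComm_mul_right, inv_mul_cancel_left, ν₂_conj_crossComm, ν₁_conj_crossComm]
  have hg : crossComm g x = t * t' * t⁻¹ * crossComm ⁅g, h⁆ x := by
    rw [crossComm_conj_crossComm, ← crossComm_mul_left]
    congr 1
    simp only [commutatorElement_def]
    group
  calc ⁅t, ν₁ G x⁆ = t * (ν₁ G x * t * (ν₁ G x)⁻¹)⁻¹ := by
        simp only [commutatorElement_def]; group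
    _ = crossComm ⁅g, h⁆ x := by rw [hx, hg]; group

theorem commutatorElement_crossComm_ν₂ (g h x : G) :
    ⁅crossComm g h, ν₂ G x⁆ = crossComm ⁅g, h⁆ x := by
  have e : ∀ y : nu G, ⁅crossComm g h, y⁆ = crossComm g h * (y * crossComm g h * y⁻¹)⁻¹ :=
    fun y => by simp only [commutatorElement_def]; group
  rw [e, ν₂_conj_crossComm, ← ν₁_conj_crossComm, ← e, commutatorElement_crossComm_ν₁]

variable (G) in
def filtrationGens (n : ℕ) : Set (nu G) :=
  ν₁ G '' (⊤ : Subgroup G).lowerCentralSeries (n + 1) ∪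
    ν₂ G '' (⊤ : Subgroup G).lowerCentralSeries (n + 1) ∪
    Set.image2 crossComm ((⊤ : Subgroup G).lowerCentralSeries n) Set.univ ∪
    Set.image2 crossComm Set.univ ((⊤ : Subgroup G).lowerCentralSeries n)

variable (G) in
def filtration (n : ℕ) : Subgroup (nu G) := closure (filtrationGens G n)

section Filtration

variable {n : ℕ}

theorem ν₁_mem_filtration {u : G} (hu : u ∈ (⊤ : Subgroup G).lowerCentralSeries (n + 1)) :
    ν₁ G u ∈ filtration G n :=
  subset_closure (.inl (.inl (.inl ⟨u, hu, rfl⟩)))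

theorem ν₂_mem_filtration {u : G} (hu : u ∈ (⊤ : Subgroup G).lowerCentralSeries (n + 1)) :
    ν₂ G u ∈ filtration G n :=
  subset_closure (.inl (.inl (.inr ⟨u, hu, rfl⟩)))

theorem crossComm_mem_filtration_of_left_mem {u : G}
    (hu : u ∈ (⊤ : Subgroup G).lowerCentralSeries n) (b : G) : crossComm u b ∈ filtration G n :=
  subset_closure (.inl (.inr ⟨u, hu, b, trivial, rfl⟩))

theorem crossComm_mem_filtration_of_right_mem {u : G}
    (hu : u ∈ (⊤ : Subgroup G).lowerCentralSeries n) (a : G) : crossComm a u ∈ filtration G n :=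
  subset_closure (.inr ⟨a, trivial, u, hu, rfl⟩)

theorem filtration_succ_le (n : ℕ) : filtration G (n + 1) ≤ filtration G n := by
  have := (⊤ : Subgroup G).lowerCentralSeries_antitone n.le_succ
  have := (⊤ : Subgroup G).lowerCentralSeries_antitone (n + 1).le_succ
  unfold filtration filtrationGens
  gcongr

theorem commutatorElement_ν_mem_filtration {u : G} (hu : u ∈ (⊤ : Subgroup G).lowerCentralSeries n)
    {t : nu G} (ht : t ∈ Set.range (ν₁ G) ∪ Set.range (ν₂ G)) :
    ⁅ν₁ G u, t⁆ ∈ filtration G n ∧ ⁅ν₂ G u, t⁆ ∈ filtration G n := by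
  have hua (a : G) : ⁅u, a⁆ ∈ (⊤ : Subgroup G).lowerCentralSeries (n + 1) :=
    commutator_mem_commutator hu (mem_top a)
  rcases ht with ⟨a, rfl⟩ | ⟨a, rfl⟩
  · refine ⟨?_, ?_⟩
    · rw [← map_commutatorElement]
      exact ν₁_mem_filtration (hua a)
    · rw [← commutatorElement_inv]
      exact inv_mem (crossComm_mem_filtration_of_right_mem hu a)
  · refine ⟨crossComm_mem_filtration_of_left_mem hu a, ?_⟩
    rw [← map_commutatorElement]
    exact ν₂_mem_filtration (hua a)

theorem commutatorElement_mem_filtration_succ {s t : nu G} (hs : s ∈ filtrationGens G n)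
    (ht : t ∈ Set.range (ν₁ G) ∪ Set.range (ν₂ G)) : ⁅s, t⁆ ∈ filtration G (n + 1) := by
  have hcross {g h : G} (hgh : ⁅g, h⁆ ∈ (⊤ : Subgroup G).lowerCentralSeries (n + 1)) :
      ⁅crossComm g h, t⁆ ∈ filtration G (n + 1) := by
    rcases ht with ⟨a, rfl⟩ | ⟨a, rfl⟩
    · rw [commutatorElement_crossComm_ν₁]
      exact crossComm_mem_filtration_of_left_mem hgh a
    · rw [commutatorElement_crossComm_ν₂]
      exact crossComm_mem_filtration_of_left_mem hgh a
  rcases hs with ((⟨u, hu, rfl⟩ | ⟨u, hu, rfl⟩) | ⟨u, hu, b, -, rfl⟩) | ⟨b, -, u, hu, rfl⟩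
  · exact (commutatorElement_ν_mem_filtration hu ht).1
  · exact (commutatorElement_ν_mem_filtration hu ht).2
  · exact hcross (commutator_mem_commutator hu (mem_top b))
  · refine hcross ?_
    rw [← commutatorElement_inv]
    exact inv_mem (commutator_mem_commutator hu (mem_top b))

instance filtration_normal (n : ℕ) : (filtration G n).Normal := by
  have hconj : ∀ t ∈ Set.range (ν₁ G) ∪ Set.range (ν₂ G), ∀ s ∈ filtrationGens G n,
      t * s * t⁻¹ ∈ filtration G n := by
    intro t ht s hs
    rw [show t * s * t⁻¹ = ⁅s, t⁆⁻¹ * s by simp only [commutatorElement_def]; group]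
    exact mul_mem (inv_mem (filtration_succ_le n (commutatorElement_mem_filtration_succ hs ht)))
      (subset_closure hs)
  rw [← normalizer_eq_top_iff, eq_top_iff, ← range_ν₁_sup_range_ν₂, sup_le_iff,
    filtration, le_normalizer_closure_iff, le_normalizer_closure_iff]
  exact ⟨fun t ht => hconj t (.inl ht), fun t ht => hconj t (.inr ht)⟩

theorem commutator_top_top_le_filtration_zero : ⁅(⊤ : Subgroup (nu G)), ⊤⁆ ≤ filtration G 0 := by
  rw [← closure_range_ν₁_union_range_ν₂]
  refine commutator_closure_le fun s hs t ht => ?_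
  rcases hs with ⟨u, rfl⟩ | ⟨u, rfl⟩
  exacts [(commutatorElement_ν_mem_filtration (mem_top u) ht).1,
    (commutatorElement_ν_mem_filtration (mem_top u) ht).2]

theorem commutator_filtration_top_le (n : ℕ) : ⁅filtration G n, ⊤⁆ ≤ filtration G (n + 1) := by
  rw [← closure_range_ν₁_union_range_ν₂]
  exact commutator_closure_le fun s hs t ht => commutatorElement_mem_filtration_succ hs ht

theorem lowerCentralSeries_succ_le_filtration (n : ℕ) :
    (⊤ : Subgroup (nu G)).lowerCentralSeries (n + 1) ≤ filtration G n := by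
  induction n with
  | zero => exact commutator_top_top_le_filtration_zero
  | succ n ih => exact (commutator_mono ih le_rfl).trans (commutator_filtration_top_le n)

theorem filtration_eq_bot (hn : (⊤ : Subgroup G).lowerCentralSeries n = ⊥) :
    filtration G n = ⊥ := by
  rw [filtration, closure_eq_bot_iff]
  simp [filtrationGens, hn]

theorem mk_conj_of_mem_filtration {x : nu G} (hx : x ∈ filtration G n) (y : nu G) :
    ((y * x * y⁻¹ : nu G) : nu G ⧸ filtration G (n + 1)) = x := by
  rw [QuotientGroup.eq]
  have := commutator_filtration_top_le n (commutator_mem_commutator (inv_mem hx) (mem_top y))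
  convert inv_mem this using 1
  simp only [commutatorElement_def]
  group

theorem mk_crossComm_pow_left {u : G} (hu : u ∈ (⊤ : Subgroup G).lowerCentralSeries n) (b : G)
    (m : ℕ) :
    ((crossComm u b : nu G) : nu G ⧸ filtration G (n + 1)) ^ m = crossComm (u ^ m) b := by
  induction m with
  | zero => simp
  | succ m ih =>
    rw [pow_succ, ih, pow_succ', crossComm_mul_left, QuotientGroup.mk_mul,
      mk_conj_of_mem_filtration (crossComm_mem_filtration_of_left_mem (pow_mem hu m) b)]

theorem mk_crossComm_pow_right {u : G} (hu : u ∈ (⊤ : Subgroup G).lowerCentralSeries n) (a : G)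
    (m : ℕ) :
    ((crossComm a u : nu G) : nu G ⧸ filtration G (n + 1)) ^ m = crossComm a (u ^ m) := by
  induction m with
  | zero => simp
  | succ m ih =>
    rw [pow_succ', ih, pow_succ', crossComm_mul_right, QuotientGroup.mk_mul,
      mk_conj_of_mem_filtration (crossComm_mem_filtration_of_right_mem (pow_mem hu m) a)]

theorem filtrationGens_finite [Finite G] (n : ℕ) : (filtrationGens G n).Finite := by
  unfold filtrationGens
  exact Set.toFinite _

theorem exists_mk_pow_eq_one_of_mem_range {p : ℕ} (hG : IsPGroup p G) (N : Subgroup (nu G))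
    [N.Normal] {t : nu G} (ht : t ∈ Set.range (ν₁ G) ∪ Set.range (ν₂ G)) :
    ∃ k : ℕ, (t : nu G ⧸ N) ^ p ^ k = 1 := by
  rcases ht with ⟨u, rfl⟩ | ⟨u, rfl⟩ <;> obtain ⟨k, hk⟩ := hG u <;> refine ⟨k, ?_⟩ <;>
    rw [← QuotientGroup.mk_pow, ← map_pow, hk, map_one, QuotientGroup.mk_one]

theorem exists_mk_filtrationGens_pow_eq_one {p : ℕ} (hG : IsPGroup p G) {s : nu G}
    (hs : s ∈ filtrationGens G n) : ∃ k : ℕ, (s : nu G ⧸ filtration G (n + 1)) ^ p ^ k = 1 := by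
  rcases hs with ((⟨u, -, rfl⟩ | ⟨u, -, rfl⟩) | ⟨u, hu, b, -, rfl⟩) | ⟨b, -, u, hu, rfl⟩
  · exact exists_mk_pow_eq_one_of_mem_range hG _ (.inl ⟨u, rfl⟩)
  · exact exists_mk_pow_eq_one_of_mem_range hG _ (.inr ⟨u, rfl⟩)
  all_goals obtain ⟨k, hk⟩ := hG u
  · exact ⟨k, by rw [mk_crossComm_pow_left hu, hk, crossComm_one_left, QuotientGroup.mk_one]⟩
  · exact ⟨k, by rw [mk_crossComm_pow_right hu, hk, crossComm_one_right, QuotientGroup.mk_one]⟩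

theorem finite_isPGroup_quotient_filtration [Finite G] {p : ℕ} (hp : p ≠ 0) (hG : IsPGroup p G)
    (n : ℕ) : Finite (nu G ⧸ filtration G n) ∧ IsPGroup p (nu G ⧸ filtration G n) := by
  induction n with
  | zero =>
    have := QuotientGroup.subsingleton_quotient_top (G := nu G)
    exact finite_isPGroup_quotient_of_commutator_le hp le_top
      commutator_top_top_le_filtration_zero (Set.toFinite _) closure_range_ν₁_union_range_ν₂
      (fun _ ht => exists_mk_pow_eq_one_of_mem_range hG _ ht) (.of_subsingleton _ _)
  | succ n ih =>
    have := ih.1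
    exact finite_isPGroup_quotient_of_commutator_le hp (filtration_succ_le n)
      (commutator_filtration_top_le n) (filtrationGens_finite n) rfl
      (fun _ hs => exists_mk_filtrationGens_pow_eq_one hG hs) ih.2

end Filtration

end Rocco

open Rocco in
/-- If `G` is a finite `p`-group of nilpotency class `c`, then `ν(G)` is a finite `p`-group of
nilpotency class at most `c + 1`. -/
theorem nu_pGroup_class_le {p : ℕ} (hp : p.Prime) (G : Type*) [Group G] [Finite G]
    (hG : IsPGroup p G) (hnil : Group.IsNilpotent G) :
    Finite (nu G) ∧ IsPGroup p (nu G) ∧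
      ∃ hn : Group.IsNilpotent (nu G),
        Group.nilpotencyClass (nu G) ≤ Group.nilpotencyClass G + 1 := by
  set c := Group.nilpotencyClass G
  have hK : filtration G c = ⊥ := filtration_eq_bot Subgroup.lowerCentralSeries_nilpotencyClass
  have hlcs : (⊤ : Subgroup (nu G)).lowerCentralSeries (c + 1) = ⊥ :=
    le_bot_iff.mp (hK ▸ lowerCentralSeries_succ_le_filtration c)
  have e : nu G ⧸ filtration G c ≃* nu G :=
    (QuotientGroup.quotientMulEquivOfEq hK).trans QuotientGroup.quotientBot
  obtain ⟨hfin, hpG⟩ := finite_isPGroup_quotient_filtration hp.ne_zero hG c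
  have hnilν : Group.IsNilpotent (nu G) := Subgroup.nilpotent_iff_lowerCentralSeries.mpr ⟨_, hlcs⟩
  exact ⟨Finite.of_equiv _ e.toEquiv, hpG.of_equiv e, hnilν,
    Subgroup.lowerCentralSeries_eq_bot_iff_nilpotencyClass_le.mp hlcs⟩
end
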